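/- arXiv:2008.04401 — 9 statements merged into one kernel-verified Lean document; each statement's English description precedes it below -/
import Mathlib

section
/- If a preference relation on a topological space is continuous and every maximal domain of comparability is connected, then the preference is gapless (i.e., x ≻ y implies there exists z with x ≻ z ≻ y). -/
variable {X : Type*}

/-- A set on which the preference is complete. -/
def IsPrefDomain (r : X → X → Prop) (A : Set X) : Prop :=
  ∀ x ∈ A, ∀ y ∈ A, r x y ∨ r y x

/-- A maximal domain of comparability. -/
def IsMaxPrefDomain (r : X → X → Prop) (A : Set X) : Prop :=
  IsPrefDomain r A ∧ ∀ B : Set X, IsPrefDomain r B → A ⊆ B → B = A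

/-- Strict preference. -/
def StrictPref (r : X → X → Prop) (x y : X) : Prop :=
  r x y ∧ ¬ r y x

/-- Gapless preference. -/
def Gapless (r : X → X → Prop) : Prop :=
  ∀ x y, StrictPref r x y → ∃ z, StrictPref r x z ∧ StrictPref r z y

/-- Continuity: upper and lower sets are closed. -/
def ContinuousPref [TopologicalSpace X] (r : X → X → Prop) : Prop :=
  ∀ x : X, IsClosed {y | r y x} ∧ IsClosed {y | r x y}

theorem connected_implies_gapless [TopologicalSpace X] (r : X → X → Prop)
    (hrefl : Reflexive r) (htrans : Transitive r)
    (hcont : ContinuousPref r)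
    (hconn : ∀ D : Set X, IsMaxPrefDomain r D → IsConnected D) :
    Gapless r := by
  rintro x y ⟨hxy, hnyx⟩
  -- {x, y} is a domain
  have hdom0 : IsPrefDomain r {x, y} := by
    rintro a (rfl | rfl) b (rfl | rfl)
    · exact Or.inl (hrefl _)
    · exact Or.inl hxy
    · exact Or.inr hxy
    · exact Or.inl (hrefl _)
  -- Zorn: extend to a maximal domain
  obtain ⟨D, hsub, hDdom, hDmax⟩ :
      ∃ D, ({x, y} : Set X) ⊆ D ∧ IsPrefDomain r D ∧
        ∀ B, IsPrefDomain r B → D ⊆ B → B = D := by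
    obtain ⟨m, hm1, hm2⟩ := zorn_subset_nonempty {A : Set X | IsPrefDomain r A}
      (fun c hc hchain _ => by
        refine ⟨⋃₀ c, ?_, fun s hs => Set.subset_sUnion_of_mem hs⟩
        rintro a ⟨s, hs, has⟩ b ⟨t, ht, hbt⟩
        rcases hchain.total hs ht with h | h
        · exact hc ht a (h has) b hbt
        · exact hc hs a has b (h hbt)) {x, y} hdom0
    exact ⟨m, hm1, hm2.1, fun B hB hmB => (hm2.2 hB hmB).antisymm hmB⟩
  have hmax : IsMaxPrefDomain r D := ⟨hDdom, hDmax⟩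
  have hDconn := hconn D hmax
  have hxD : x ∈ D := hsub (Set.mem_insert _ _)
  have hyD : y ∈ D := hsub (Set.mem_insert_of_mem _ rfl)
  by_contra hno
  push_neg at hno
  -- partition D by two closed sets
  have := isPreconnected_closed_iff.1 hDconn.2 {z | r z x} {z | r y z}
    (hcont x).1 (hcont y).2 ?_ ⟨x, hxD, hrefl x⟩ ⟨y, hyD, hrefl y⟩
  · obtain ⟨z, _, hzx, hyz⟩ := this
    exact hnyx (htrans hyz hzx)
  · intro z hz
    rcases hDdom z hz x hxD with hzx | hxz
    · exact Or.inl hzx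
    rcases hDdom y hyD z hz with hyz | hzy
    · exact Or.inr hyz
    by_cases hzx : r z x
    · exact Or.inl hzx
    by_cases hyz : r y z
    · exact Or.inr hyz
    exact absurd (⟨hzy, hyz⟩ : StrictPref r z y) (hno z ⟨hxz, hzx⟩)
end

section
/- If ≿ is a continuous preference on a topological space X, then every maximal domain is a closed subset of X. -/
variable {X : Type*}

theorem maxDomain_isClosed [TopologicalSpace X] (r : X → X → Prop)
    (hrefl : Reflexive r) (htrans : Transitive r)
    (hcont : ContinuousPref r)
    (D : Set X) (hD : IsMaxPrefDomain r D) :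
    IsClosed D := by
  obtain ⟨hdom, hmax⟩ := hD
  have key : ∀ x ∈ closure D, ∀ d ∈ D, r x d ∨ r d x := by
    intro x hx d hd
    have hcl : IsClosed ({y | r y d} ∪ {y | r d y}) :=
      (hcont d).1.union (hcont d).2
    have hsub : D ⊆ {y | r y d} ∪ {y | r d y} := fun z hz => hdom z hz d hd
    exact hcl.closure_subset_iff.mpr hsub hx
  have hDeq : closure D ⊆ D := by
    intro x hx
    have hdom' : IsPrefDomain r (insert x D) := by
      intro a ha b hb
      rcases ha with rfl | ha
      · rcases hb with rfl | hb
        · exact Or.inl (hrefl _)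
        · exact key a hx b hb
      · rcases hb with rfl | hb
        · exact (key b hx a ha).symm
        · exact hdom a ha b hb
    have := hmax (insert x D) hdom' (Set.subset_insert x D)
    rw [← this]
    exact Set.mem_insert x D
  have : closure D = D := Set.Subset.antisymm hDeq subset_closure
  rw [← this]
  exact isClosed_closure
end

section
/- If X is compact and ≿ is a continuous preference, then every maximal domain of ≿ is compact. -/
variable {X : Type*}

theorem maxDomain_isCompact [TopologicalSpace X] [CompactSpace X] (r : X → X → Prop)
    (hrefl : Reflexive r) (htrans : Transitive r)
    (hcont : ContinuousPref r)
    (D : Set X) (hD : IsMaxPrefDomain r D) :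
    IsCompact D := by
  have hdom : IsPrefDomain r (closure D) := by
    intro x hx y hy
    by_contra hc
    push_neg at hc
    obtain ⟨hxy, hyx⟩ := hc
    -- open neighborhood of x of points incomparable to y
    have hUx : IsOpen ({z | r z y} ∪ {z | r y z})ᶜ :=
      (((hcont y).1).union ((hcont y).2)).isOpen_compl
    have hxmem : x ∈ ({z | r z y} ∪ {z | r y z})ᶜ := by
      simp only [Set.mem_compl_iff, Set.mem_union, Set.mem_setOf_eq]
      tauto
    obtain ⟨d, hd⟩ : ∃ d, d ∈ ({z | r z y} ∪ {z | r y z})ᶜ ∩ D :=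
      mem_closure_iff.mp hx _ hUx hxmem
    obtain ⟨hdnc, hdD⟩ := hd
    simp only [Set.mem_compl_iff, Set.mem_union, Set.mem_setOf_eq] at hdnc
    push_neg at hdnc
    have hUy : IsOpen ({z | r z d} ∪ {z | r d z})ᶜ :=
      (((hcont d).1).union ((hcont d).2)).isOpen_compl
    have hymem : y ∈ ({z | r z d} ∪ {z | r d z})ᶜ := by
      simp only [Set.mem_compl_iff, Set.mem_union, Set.mem_setOf_eq]
      tauto
    obtain ⟨e, he⟩ : ∃ e, e ∈ ({z | r z d} ∪ {z | r d z})ᶜ ∩ D :=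
      mem_closure_iff.mp hy _ hUy hymem
    obtain ⟨henc, heD⟩ := he
    simp only [Set.mem_compl_iff, Set.mem_union, Set.mem_setOf_eq] at henc
    push_neg at henc
    rcases hD.1 d hdD e heD with h | h
    · exact henc.2 h
    · exact henc.1 h
  have hclo : closure D = D := hD.2 _ hdom subset_closure
  have : IsClosed D := hclo ▸ isClosed_closure
  exact this.isCompact
end

section
/- Let X be a compact topological space and ≿ a continuous, gapless, antisymmetric preference (partial order) on X. Then every maximal domain of ≿ is connected. -/
variable {X : Type*}

/-- A nonempty compact chain has a greatest element. -/
lemma exists_greatest_aux [TopologicalSpace X] (r : X → X → Prop)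
    (hrefl : Reflexive r) (htrans : Transitive r)
    (hcl : ∀ x : X, IsClosed {y | r x y})
    (S : Set X) (hSc : IsCompact S) (hchain : IsPrefDomain r S) (hne : S.Nonempty) :
    ∃ m ∈ S, ∀ x ∈ S, r x m := by
  have key : (S ∩ ⋂ i : S, {y | r (i : X) y}).Nonempty := by
    apply hSc.inter_iInter_nonempty (fun i : S => {y | r (i : X) y}) (fun i => hcl i)
    intro u
    have : ∃ m ∈ S, ∀ i ∈ u, r (i : X) m := by
      classical
      induction u using Finset.induction with
      | empty => exact ⟨hne.choose, hne.choose_spec, by simp⟩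
      | @insert a u ha ih =>
        obtain ⟨m, hmS, hm⟩ := ih
        rcases hchain _ a.2 _ hmS with h | h
        · exact ⟨m, hmS, by
            intro i hi
            rcases Finset.mem_insert.1 hi with rfl | hi
            · exact h
            · exact hm i hi⟩
        · refine ⟨a, a.2, ?_⟩
          intro i hi
          rcases Finset.mem_insert.1 hi with rfl | hi
          · exact hrefl _
          · exact htrans (hm i hi) h
    obtain ⟨m, hmS, hm⟩ := this
    exact ⟨m, hmS, by simpa using hm⟩
  obtain ⟨m, hmS, hm⟩ := key
  refine ⟨m, hmS, fun x hx => ?_⟩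
  simpa using Set.mem_iInter.1 hm ⟨x, hx⟩

theorem maxDomain_isConnected_of_antisymm [TopologicalSpace X] [CompactSpace X] [Nonempty X]
    (r : X → X → Prop)
    (hrefl : Reflexive r) (htrans : Transitive r) (hanti : AntiSymmetric r)
    (hcont : ContinuousPref r) (hgap : Gapless r)
    (D : Set X) (hD : IsMaxPrefDomain r D) :
    IsConnected D := by
  classical
  -- D is nonempty
  have hDne : D.Nonempty := by
    rcases D.eq_empty_or_nonempty with h | h
    · exfalso
      obtain ⟨x⟩ := ‹Nonempty X›
      have hdom : IsPrefDomain r {x} := by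
        intro a ha b hb
        rw [Set.mem_singleton_iff] at ha hb
        rw [ha, hb]; exact Or.inl (hrefl x)
      have := hD.2 {x} hdom (by simp [h])
      simp [h] at this
    · exact h
  -- Key: anything comparable with all of D lies in D
  have hmem : ∀ z : X, (∀ d ∈ D, r z d ∨ r d z) → z ∈ D := by
    intro z hz
    have hdom : IsPrefDomain r (insert z D) := by
      intro p hp q hq
      rcases Set.mem_insert_iff.1 hp with hpz | hpD
      · rcases Set.mem_insert_iff.1 hq with hqz | hqD
        · rw [hpz, hqz]; exact Or.inl (hrefl z)
        · rw [hpz]; exact hz q hqD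
      · rcases Set.mem_insert_iff.1 hq with hqz | hqD
        · rw [hqz]; exact (hz p hpD).symm
        · exact hD.1 p hpD q hqD
    have := hD.2 _ hdom (Set.subset_insert z D)
    rw [← this]; exact Set.mem_insert z D
  -- D is closed
  have hDcl : IsClosed D := by
    have : D = ⋂ d : D, ({y | r y (d : X)} ∪ {y | r (d : X) y}) := by
      apply Set.Subset.antisymm
      · intro x hx
        exact Set.mem_iInter.2 fun d => (hD.1 x hx d d.2)
      · intro x hx
        refine hmem x fun d hd => Set.mem_iInter.1 hx ⟨d, hd⟩
    rw [this]
    exact isClosed_iInter fun d => ((hcont d).1.union (hcont d).2)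
  have hDcomp : IsCompact D := hDcl.isCompact
  -- key contradiction lemma
  have key : ∀ A B : Set X, IsClosed A → IsClosed B → A ∪ B = D → A ∩ B = ∅ →
      ∀ a ∈ A, ∀ b ∈ B, r a b → False := by
    intro A B hAcl hBcl hABu hABi a ha b hb hab
    have hAD : A ⊆ D := hABu ▸ Set.subset_union_left
    have hBD : B ⊆ D := hABu ▸ Set.subset_union_right
    -- S : elements of A below b
    set S : Set X := A ∩ {x | r x b} with hSdef
    have hScomp : IsCompact S := (hAcl.inter (hcont b).1).isCompact
    have hSchain : IsPrefDomain r S := fun x hx y hy =>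
      hD.1 x (hAD hx.1) y (hAD hy.1)
    have hSne : S.Nonempty := ⟨a, ha, hab⟩
    obtain ⟨m, hmS, hm⟩ := exists_greatest_aux r hrefl htrans (fun x => (hcont x).2)
      S hScomp hSchain hSne
    -- T : elements of B above m
    set T : Set X := B ∩ {y | r m y} with hTdef
    have hTcomp : IsCompact T := (hBcl.inter (hcont m).2).isCompact
    have hTchain : IsPrefDomain (fun x y => r y x) T := fun x hx y hy =>
      (hD.1 x (hBD hx.1) y (hBD hy.1)).symm
    have hTne : T.Nonempty := ⟨b, hb, hmS.2⟩
    obtain ⟨n, hnT, hn⟩ := exists_greatest_aux (fun x y => r y x) hrefl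
      (fun x y z hxy hyz => htrans hyz hxy) (fun x => (hcont x).1)
      T hTcomp hTchain hTne
    -- m ∈ A, n ∈ B, m ≺ n
    have hmA : m ∈ A := hmS.1
    have hnB : n ∈ B := hnT.1
    have hmn : m ≠ n := by
      rintro rfl
      exact Set.eq_empty_iff_forall_notMem.1 hABi m ⟨hmA, hnB⟩
    have hrmn : r m n := hnT.2
    have hstrict : StrictPref r m n := ⟨hrmn, fun h => hmn (hanti hrmn h)⟩
    obtain ⟨z, ⟨hmz, hzm⟩, ⟨hzn, hnz⟩⟩ := hgap m n hstrict
    have hnb : r n b := hn b ⟨hb, hmS.2⟩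
    -- z is comparable with everything in D
    have hzD : z ∈ D := by
      apply hmem
      intro d hd
      rcases hD.1 d hd m (hAD hmA) with hdm | hmd
      · exact Or.inr (htrans hdm hmz)
      · rcases hD.1 d hd n (hBD hnB) with hdn | hnd
        · -- r m d and r d n
          have hdD : d ∈ A ∪ B := hABu.symm ▸ hd
          rcases hdD with hdA | hdB
          · have hdS : d ∈ S := ⟨hdA, htrans hdn hnb⟩
            have : d = m := hanti (hm d hdS) hmd
            exact Or.inr (this ▸ hmz)
          · have hdT : d ∈ T := ⟨hdB, hmd⟩
            have : d = n := hanti hdn (hn d hdT)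
            exact Or.inl (this ▸ hzn)
        · exact Or.inl (htrans hzn hnd)
    have hzAB : z ∈ A ∪ B := hABu.symm ▸ hzD
    rcases hzAB with hzA | hzB
    · have hzS : z ∈ S := ⟨hzA, htrans hzn hnb⟩
      exact hzm (hm z hzS)
    · have hzT : z ∈ T := ⟨hzB, hmz⟩
      exact hnz (hn z hzT)
  refine ⟨hDne, ?_⟩
  intro U V hU hV hUV hne1 hne2
  by_contra hcon
  rw [Set.not_nonempty_iff_eq_empty] at hcon
  set A : Set X := D \ V with hAdef
  set B : Set X := D \ U with hBdef
  have hAcl : IsClosed A := hDcl.sdiff hV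
  have hBcl : IsClosed B := hDcl.sdiff hU
  have hABu : A ∪ B = D := by
    apply Set.Subset.antisymm
    · rintro x (⟨hx, _⟩ | ⟨hx, _⟩) <;> exact hx
    · intro x hx
      rcases hUV hx with hxU | hxV
      · exact Or.inl ⟨hx, fun hxV => Set.eq_empty_iff_forall_notMem.1 hcon x ⟨hx, hxU, hxV⟩⟩
      · exact Or.inr ⟨hx, fun hxU => Set.eq_empty_iff_forall_notMem.1 hcon x ⟨hx, hxU, hxV⟩⟩
  have hABi : A ∩ B = ∅ := by
    apply Set.eq_empty_iff_forall_notMem.2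
    rintro x ⟨⟨hxD, hxV⟩, ⟨_, hxU⟩⟩
    rcases hUV hxD with h | h
    · exact hxU h
    · exact hxV h
  obtain ⟨a0, ha0D, ha0U⟩ := hne1
  obtain ⟨b0, hb0D, hb0V⟩ := hne2
  have ha0A : a0 ∈ A := ⟨ha0D, fun h => Set.eq_empty_iff_forall_notMem.1 hcon a0 ⟨ha0D, ha0U, h⟩⟩
  have hb0B : b0 ∈ B := ⟨hb0D, fun h => Set.eq_empty_iff_forall_notMem.1 hcon b0 ⟨hb0D, h, hb0V⟩⟩
  rcases hD.1 a0 ha0D b0 hb0D with h | h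
  · exact key A B hAcl hBcl hABu hABi a0 ha0A b0 hb0B h
  · exact key B A hBcl hAcl (Set.union_comm A B ▸ hABu) (Set.inter_comm A B ▸ hABi) b0 hb0B a0 ha0A h
end

section
/- If ≿ is a continuous preference on X, A is a nonempty compact domain, and ≿ is complete on A, then A contains a ≿-greatest element and a ≿-least element of A. -/
variable {X : Type*}

lemma aux_greatest [TopologicalSpace X] (r : X → X → Prop)
    (hrefl : Reflexive r) (htrans : Transitive r)
    (hclosed : ∀ x : X, IsClosed {y | r y x})
    (A : Set X) (hne : A.Nonempty) (hcomp : IsCompact A) (hdom : IsPrefDomain r A) :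
    ∃ x ∈ A, ∀ a ∈ A, r x a := by
  -- finite "maximum" in A
  classical
  have hfin : ∀ u : Finset X, ∃ x ∈ A, ∀ a ∈ u, a ∈ A → r x a := by
    intro u
    induction u using Finset.induction with
    | empty => exact ⟨hne.choose, hne.choose_spec, fun a ha _ => absurd ha (by simp)⟩
    | @insert b u hb ih =>
      obtain ⟨x, hxA, hx⟩ := ih
      by_cases hbA : b ∈ A
      · rcases hdom x hxA b hbA with h | h
        · exact ⟨x, hxA, fun a ha haA => by
            rcases Finset.mem_insert.1 ha with rfl | ha'
            · exact h
            · exact hx a ha' haA⟩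
        · exact ⟨b, hbA, fun a ha haA => by
            rcases Finset.mem_insert.1 ha with rfl | ha'
            · exact hrefl _
            · exact htrans h (hx a ha' haA)⟩
      · exact ⟨x, hxA, fun a ha haA => by
          rcases Finset.mem_insert.1 ha with rfl | ha'
          · exact absurd haA hbA
          · exact hx a ha' haA⟩
  -- family of closed sets over A
  have key : (A ∩ ⋂ a : A, {y | r y (a : X)}).Nonempty := by
    apply hcomp.inter_iInter_nonempty (fun a : A => {y | r y (a : X)})
      (fun a => hclosed (a : X))
    intro u
    obtain ⟨x, hxA, hx⟩ := hfin (u.image (fun a : A => (a : X)))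
    refine ⟨x, hxA, ?_⟩
    simp only [Set.mem_iInter]
    intro a ha
    exact hx a (Finset.mem_image_of_mem _ ha) a.2
  obtain ⟨x, hxA, hx⟩ := key
  refine ⟨x, hxA, fun a haA => ?_⟩
  have := Set.mem_iInter.1 hx ⟨a, haA⟩
  exact this

theorem compact_domain_has_greatest_and_least [TopologicalSpace X] (r : X → X → Prop)
    (hrefl : Reflexive r) (htrans : Transitive r)
    (hcont : ContinuousPref r)
    (A : Set X) (hne : A.Nonempty) (hcomp : IsCompact A) (hdom : IsPrefDomain r A) :
    (∃ x ∈ A, ∀ a ∈ A, r x a) ∧ (∃ x ∈ A, ∀ a ∈ A, r a x) := by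
  constructor
  · exact aux_greatest r hrefl htrans (fun x => (hcont x).1) A hne hcomp hdom
  · exact aux_greatest (fun x y => r y x) (fun x => hrefl x)
      (fun _ _ _ h1 h2 => htrans h2 h1) (fun x => (hcont x).2) A hne hcomp
      (fun x hx y hy => (hdom x hx y hy).symm)
end

section
/- Let X = [-1,1] with its usual topology and define x ≿ y iff x = y or (x² = 1 and y² = 1). Then ≿ is a continuous and gapless preference, but the set {-1, 1} is a maximal domain of ≿ that is not connected; hence continuity and gaplessness do not imply connectedness of maximal domains. -/
variable {X : Type*}

theorem continuous_gapless_not_connected :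
    let Y := (Set.Icc (-1 : ℝ) 1)
    let r : Y → Y → Prop := fun x y => (x : ℝ) = (y : ℝ) ∨ ((x : ℝ)^2 = 1 ∧ (y : ℝ)^2 = 1)
    let D : Set Y := {x | (x : ℝ) = -1 ∨ (x : ℝ) = 1}
    Reflexive r ∧ Transitive r ∧ ContinuousPref r ∧ Gapless r ∧
      IsMaxPrefDomain r D ∧ ¬ IsConnected D := by
  intro Y r D
  set a : Y := ⟨-1, Set.mem_Icc.mpr (by norm_num)⟩ with ha
  set b : Y := ⟨1, Set.mem_Icc.mpr (by norm_num)⟩ with hb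
  have hsq : ∀ x : Y, (x : ℝ)^2 = 1 ↔ ((x : ℝ) = -1 ∨ (x : ℝ) = 1) := by
    intro x
    constructor
    · intro h
      have h2 : ((x : ℝ) - 1) * ((x : ℝ) + 1) = 0 := by ring_nf; nlinarith
      rcases mul_eq_zero.mp h2 with h3 | h3
      · right; linarith
      · left; linarith
    · rintro (h | h) <;> rw [h] <;> norm_num
  have hsymm : ∀ x y : Y, r x y → r y x := by
    rintro x y (h | ⟨h1, h2⟩)
    · exact Or.inl h.symm
    · exact Or.inr ⟨h2, h1⟩
  have hclosed : ∀ x : Y, IsClosed {y : Y | r y x} := by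
    intro x
    have hfin : ({y : Y | r y x}).Finite := by
      apply Set.Finite.subset ((Set.finite_singleton b).insert a |>.insert x)
      rintro y (h | ⟨h1, h2⟩)
      · exact Or.inl (Subtype.ext h)
      · rcases (hsq y).mp h1 with h3 | h3
        · exact Or.inr (Or.inl (Subtype.ext (by rw [h3, ha])))
        · exact Or.inr (Or.inr (Subtype.ext (by rw [h3, hb])))
    exact hfin.isClosed
  refine ⟨fun x => Or.inl rfl, ?_, ?_, ?_, ⟨?_, ?_⟩, ?_⟩
  · -- Transitive
    rintro x y z (h | ⟨h1, h2⟩) (h' | ⟨h1', h2'⟩)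
    · exact Or.inl (h.trans h')
    · exact Or.inr ⟨by rw [h]; exact h1', h2'⟩
    · exact Or.inr ⟨h1, by rw [← h']; exact h2⟩
    · exact Or.inr ⟨h1, h2'⟩
  · -- ContinuousPref
    intro x
    refine ⟨hclosed x, ?_⟩
    have : {y : Y | r x y} = {y : Y | r y x} := by
      ext y; exact ⟨hsymm x y, hsymm y x⟩
    rw [this]; exact hclosed x
  · -- Gapless
    rintro x y ⟨h1, h2⟩
    exact absurd (hsymm x y h1) h2
  · -- IsPrefDomain D
    intro x hx y hy
    exact Or.inl (Or.inr ⟨(hsq x).mpr hx, (hsq y).mpr hy⟩)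
  · -- maximality
    intro B hB hDB
    apply Set.Subset.antisymm _ hDB
    intro x hx
    have hbB : b ∈ B := hDB (Or.inr (by rw [hb]))
    rcases hB x hx b hbB with (h | ⟨h1, _⟩) | (h | ⟨_, h1⟩)
    · right; rw [h, hb]
    · exact (hsq x).mp h1
    · right; rw [← h, hb]
    · exact (hsq x).mp h1
  · -- not connected
    rintro ⟨_, hconn⟩
    obtain ⟨z, hzD, hz1, hz2⟩ := hconn {y : Y | (y : ℝ) < 0} {y : Y | 0 < (y : ℝ)}
      (isOpen_Iio.preimage continuous_subtype_val)
      (isOpen_Ioi.preimage continuous_subtype_val)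
      (by rintro y (h | h) <;> simp [h])
      ⟨a, Or.inl (by rw [ha]), by simp [ha]⟩
      ⟨b, Or.inr (by rw [hb]), by simp [hb]⟩
    simp only [Set.mem_setOf_eq] at hz1 hz2
    linarith
end

section
/- Let X = {-1} ∪ [0,1) with the subspace topology of ℝ and define x ≿ y iff x = −1 or x ≥ y ≥ 0. Then ≿ is a complete, continuous, gapless preference, but its unique maximal domain X is not connected; hence compactness cannot be dropped from the sufficiency theorem. -/
variable {X : Type*}

theorem compactness_cannot_be_dropped :
    let Y := (({-1} ∪ Set.Ico 0 1 : Set ℝ))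
    let r : Y → Y → Prop := fun x y => (x : ℝ) = -1 ∨ ((y : ℝ) ≤ (x : ℝ) ∧ 0 ≤ (y : ℝ))
    Reflexive r ∧ Transitive r ∧ (∀ x y : Y, r x y ∨ r y x) ∧
      ContinuousPref r ∧ Gapless r ∧
      (∀ D : Set Y, IsMaxPrefDomain r D ↔ D = Set.univ) ∧
      ¬ IsConnected (Set.univ : Set Y) := by
  intro Y r
  have hmem : ∀ x : Y, (x : ℝ) = -1 ∨ (0 ≤ (x : ℝ) ∧ (x : ℝ) < 1) := by
    intro x
    rcases x.2 with h | h
    · exact Or.inl h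
    · exact Or.inr h
  have hcomp : ∀ x y : Y, r x y ∨ r y x := by
    intro x y
    rcases hmem x with hx | hx
    · exact Or.inl (Or.inl hx)
    rcases hmem y with hy | hy
    · exact Or.inr (Or.inl hy)
    rcases le_total (y : ℝ) (x : ℝ) with h | h
    · exact Or.inl (Or.inr ⟨h, hy.1⟩)
    · exact Or.inr (Or.inr ⟨h, hx.1⟩)
  refine ⟨?_, ?_, hcomp, ?_, ?_, ?_, ?_⟩
  · -- Reflexive
    intro x
    rcases hmem x with hx | hx
    · exact Or.inl hx
    · exact Or.inr ⟨le_refl _, hx.1⟩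
  · -- Transitive
    intro x y z hxy hyz
    rcases hxy with hx | ⟨hyx, hy⟩
    · exact Or.inl hx
    rcases hyz with hy' | ⟨hzy, hz⟩
    · exfalso; rw [hy'] at hy; linarith
    · exact Or.inr ⟨hzy.trans hyx, hz⟩
  · -- ContinuousPref
    intro x
    constructor
    · -- upper set {y | r y x}
      by_cases hx : 0 ≤ (x : ℝ)
      · have : {y : Y | r y x} = (fun y : Y => (y : ℝ)) ⁻¹' ({-1} ∪ Set.Ici (x : ℝ)) := by
          ext y
          simp only [Set.mem_setOf_eq, Set.mem_preimage, Set.mem_union, Set.mem_singleton_iff,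
            Set.mem_Ici, r]
          constructor
          · rintro (h | ⟨h, _⟩); exacts [Or.inl h, Or.inr h]
          · rintro (h | h); exacts [Or.inl h, Or.inr ⟨h, hx⟩]
        rw [this]
        exact (isClosed_singleton.union isClosed_Ici).preimage continuous_subtype_val
      · have : {y : Y | r y x} = (fun y : Y => (y : ℝ)) ⁻¹' ({-1} : Set ℝ) := by
          ext y
          simp only [Set.mem_setOf_eq, Set.mem_preimage, Set.mem_singleton_iff, r]
          constructor
          · rintro (h | ⟨_, _⟩); exacts [h, absurd ‹0 ≤ (x:ℝ)› hx]
          · exact fun h => Or.inl h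
        rw [this]
        exact isClosed_singleton.preimage continuous_subtype_val
    · -- lower set {y | r x y}
      by_cases hx : (x : ℝ) = -1
      · have : {y : Y | r x y} = Set.univ := by
          ext y; simp [r, hx]
        rw [this]; exact isClosed_univ
      · have : {y : Y | r x y} = (fun y : Y => (y : ℝ)) ⁻¹' (Set.Icc 0 (x : ℝ)) := by
          ext y
          simp only [Set.mem_setOf_eq, Set.mem_preimage, Set.mem_Icc, r]
          constructor
          · rintro (h | ⟨h1, h2⟩); exacts [absurd h hx, ⟨h2, h1⟩]
          · exact fun h => Or.inr ⟨h.2, h.1⟩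
        rw [this]
        exact isClosed_Icc.preimage continuous_subtype_val
  · -- Gapless
    intro x y ⟨hxy, hnyx⟩
    rcases hxy with hx | ⟨hyx, hy⟩
    · -- x = -1, and y ≠ -1
      have hy : 0 ≤ (y : ℝ) ∧ (y : ℝ) < 1 := by
        rcases hmem y with h | h
        · exact absurd (Or.inl h) hnyx
        · exact h
      refine ⟨⟨((y : ℝ) + 1) / 2, Or.inr ⟨by linarith [hy.1], by linarith [hy.2]⟩⟩, ?_, ?_⟩
      · refine ⟨Or.inl hx, ?_⟩
        rintro (h | ⟨_, h⟩)
        · simp only at h; linarith [hy.1]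
        · rw [hx] at h; linarith
      · refine ⟨Or.inr ⟨by simp; linarith [hy.2], hy.1⟩, ?_⟩
        rintro (h | ⟨h, _⟩)
        · linarith [hy.1]
        · simp only at h; linarith [hy.2]
    · -- 0 ≤ y ≤ x, and y < x
      have hx0 : 0 ≤ (x : ℝ) := le_trans hy hyx
      have hylt : (y : ℝ) < (x : ℝ) := by
        by_contra h
        push_neg at h
        exact hnyx (Or.inr ⟨h, hx0⟩)
      have hx1 : (x : ℝ) < 1 := by
        rcases hmem x with h | h
        · linarith
        · exact h.2
      refine ⟨⟨((x : ℝ) + (y : ℝ)) / 2, Or.inr ⟨by linarith, by linarith⟩⟩, ?_, ?_⟩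
      · refine ⟨Or.inr ⟨by simp; linarith, by linarith⟩, ?_⟩
        rintro (h | ⟨h, _⟩)
        · simp only at h; linarith
        · simp only at h; linarith
      · refine ⟨Or.inr ⟨by simp; linarith, hy⟩, ?_⟩
        rintro (h | ⟨h, _⟩)
        · linarith
        · simp only at h; linarith
  · -- maximal domains
    intro D
    constructor
    · rintro ⟨_, hmax⟩
      exact (hmax Set.univ (fun x _ y _ => hcomp x y) (Set.subset_univ D)).symm
    · rintro rfl
      exact ⟨fun x _ y _ => hcomp x y, fun B _ hB => Set.eq_univ_of_univ_subset hB⟩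
  · -- not connected
    rintro ⟨_, hpre⟩
    have hne1 : (-1 : ℝ) ∈ ({-1} ∪ Set.Ico 0 1 : Set ℝ) := Or.inl rfl
    have h0 : (0 : ℝ) ∈ ({-1} ∪ Set.Ico 0 1 : Set ℝ) := Or.inr ⟨le_refl _, zero_lt_one⟩
    have := hpre ((fun y : Y => (y : ℝ)) ⁻¹' Set.Iio 0) ((fun y : Y => (y : ℝ)) ⁻¹' Set.Ioi (-1/2))
      (isOpen_Iio.preimage continuous_subtype_val) (isOpen_Ioi.preimage continuous_subtype_val)
      ?_ ⟨⟨-1, hne1⟩, Set.mem_univ _, by norm_num⟩ ⟨⟨0, h0⟩, Set.mem_univ _, by norm_num⟩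
    · rcases this with ⟨z, _, hz1, hz2⟩
      simp only [Set.mem_preimage, Set.mem_Iio, Set.mem_Ioi] at hz1 hz2
      rcases hmem z with h | h
      · rw [h] at hz2; linarith
      · linarith [h.1]
    · intro z _
      rcases hmem z with h | h
      · exact Or.inl (by simp [Set.mem_preimage, h])
      · exact Or.inr (by simp only [Set.mem_preimage, Set.mem_Ioi]; linarith [h.1])
end

section
/- Let X be a compact metrizable space and ≿ a continuous, complete, antisymmetric preference on X (a continuous linear order). If X is connected and has at least two points, then X is homeomorphic to the closed unit interval [0,1], via a continuous utility representation. -/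
variable {X : Type*}

/-!
Continuity of the preference makes the rays of the induced linear order open, so the order
topology is a Hausdorff topology coarser than the compact topology of `X`, hence equal to it.
Connectedness makes the order dense, and by Cantor's back-and-forth theorem a countable dense
subset without endpoints is order-isomorphic to `ℚ ∩ (0, 1)`; taking suprema extends this to a
strictly monotone map `X → [0, 1]` with dense range. Such a map is continuous, so its range is
compact, hence closed, hence all of `[0, 1]`, and an order isomorphism between order topologies
is a homeomorphism.
-/

open Set Topology TopologicalSpace

theorem OrderTopology.of_compactSpace (α : Type*) [τ : TopologicalSpace α] [LinearOrder α]
    [ClosedIicTopology α] [ClosedIciTopology α] [CompactSpace α] : OrderTopology α := by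
  have hfiner : τ ≤ Preorder.topology α :=
    le_generateFrom <| by rintro _ ⟨a, rfl | rfl⟩; exacts [isOpen_Ioi, isOpen_Iio]
  have hT2 : @T2Space α (Preorder.topology α) := by
    let := Preorder.topology α
    have : OrderTopology α := ⟨rfl⟩
    infer_instance
  -- the identity from the compact topology to the Hausdorff order topology is a homeomorphism
  have hcont : Continuous[τ, Preorder.topology α] (Equiv.refl α) := continuous_id_iff_le.2 hfiner
  exact ⟨le_antisymm hfiner <| continuous_id_iff_le.1 <|
    @Homeomorph.continuous_symm α α τ (Preorder.topology α)
      (@Continuous.homeoOfEquivCompactToT2 _ _ τ (Preorder.topology α) _ hT2 _ hcont)⟩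

theorem strictMono_sSup_image_setOf_coe_le {α : Type*} [LinearOrder α] {s : Set α} {g : s → ℝ}
    (hs : ∀ x y : α, x < y → ∃ d ∈ s, x < d ∧ d < y)
    (hg : StrictMono g) (hg0 : ∀ d, 0 ≤ g d) (hbdd : BddAbove (range g)) :
    StrictMono fun x : α ↦ sSup (g '' {d | (d : α) ≤ x}) := by
  intro x y hxy
  obtain ⟨d₁, hd₁, hxd₁, hd₁y⟩ := hs x y hxy
  obtain ⟨d₂, hd₂, hd₁d₂, hd₂y⟩ := hs d₁ y hd₁y
  -- `{d | d ≤ x}` may be empty, and `Real.sSup_le` covers that case through `0 ≤ g d₁`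
  calc sSup (g '' {d | (d : α) ≤ x})
      ≤ g ⟨d₁, hd₁⟩ := Real.sSup_le (by
        rintro _ ⟨d, hd, rfl⟩; exact (hg (show (d : α) < d₁ from hd.trans_lt hxd₁)).le) (hg0 _)
    _ < g ⟨d₂, hd₂⟩ := hg hd₁d₂
    _ ≤ sSup (g '' {d | (d : α) ≤ y}) :=
        le_csSup (hbdd.mono (image_subset_range _ _)) ⟨⟨d₂, hd₂⟩, hd₂y.le, rfl⟩

theorem exists_strictMono_denseRange_Icc (α : Type*) [LinearOrder α] [TopologicalSpace α]
    [OrderTopology α] [DenselyOrdered α] [SeparableSpace α] [Nontrivial α] :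
    ∃ u : α → Icc (0 : ℝ) 1, StrictMono u ∧ DenseRange u := by
  obtain ⟨s, hsc, hsd, hbot, htop⟩ := exists_countable_dense_no_bot_top α
  have hs : ∀ x y : α, x < y → ∃ d ∈ s, x < d ∧ d < y := fun x y h ↦ hsd.exists_between h
  have : Countable s := hsc.to_subtype
  have : Nonempty s := hsd.nonempty.to_subtype
  have : DenselyOrdered s := ⟨fun a b h ↦
    let ⟨d, hd, had, hdb⟩ := hs a b h; ⟨⟨d, hd⟩, had, hdb⟩⟩
  have : NoMinOrder s := ⟨fun d ↦
    let ⟨y, hy⟩ := not_isMin_iff.1 (mt isBot_iff_isMin.2 (hbot d · d.2))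
    let ⟨c, hc, _, hcd⟩ := hs y d hy; ⟨⟨c, hc⟩, hcd⟩⟩
  have : NoMaxOrder s := ⟨fun d ↦
    let ⟨y, hy⟩ := not_isMax_iff.1 (mt isTop_iff_isMax.2 (htop d · d.2))
    let ⟨c, hc, hdc, _⟩ := hs d y hy; ⟨⟨c, hc⟩, hdc⟩⟩
  have : Nonempty (Ioo (0 : ℚ) 1) := nonempty_Ioo_subtype one_pos
  obtain ⟨σ⟩ := Order.iso_of_countable_dense s (Ioo (0 : ℚ) 1)
  set g : s → ℝ := fun d ↦ ((σ d : ℚ) : ℝ)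
  have hg : StrictMono g := fun a b h ↦ Rat.cast_lt.2 (σ.strictMono h)
  have hg0 : ∀ d, 0 ≤ g d := fun d ↦ Rat.cast_nonneg.2 (σ d).2.1.le
  have hg1 : ∀ d, g d ≤ 1 := fun d ↦ (Rat.cast_le.2 (σ d).2.2.le).trans_eq Rat.cast_one
  let u : α → Icc (0 : ℝ) 1 := fun x ↦ ⟨sSup (g '' {d | (d : α) ≤ x}),
    Real.sSup_nonneg (by rintro _ ⟨d, -, rfl⟩; exact hg0 d),
    Real.sSup_le (by rintro _ ⟨d, -, rfl⟩; exact hg1 d) zero_le_one⟩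
  refine ⟨u, fun x y h ↦
    strictMono_sSup_image_setOf_coe_le hs hg hg0 ⟨1, by rintro _ ⟨d, rfl⟩; exact hg1 d⟩ h, ?_⟩
  refine dense_iff_exists_between.2 fun a b hab ↦ ?_
  obtain ⟨q, haq, hqb⟩ := exists_rat_btwn (Subtype.coe_lt_coe.2 hab)
  have hq : q ∈ Ioo (0 : ℚ) 1 := by
    constructor
    · exact_mod_cast a.2.1.trans_lt haq
    · exact_mod_cast hqb.trans_le b.2.2
  refine ⟨u (σ.symm ⟨q, hq⟩), mem_range_self _, ?_⟩
  have hu : (u (σ.symm ⟨q, hq⟩) : ℝ) = q :=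
    (hg.monotone.map_isGreatest isGreatest_Iic).csSup_eq.trans (by simp [g])
  constructor <;> rw [← Subtype.coe_lt_coe, hu] <;> assumption

theorem nonempty_orderIso_Icc_of_compactSpace (α : Type*) [LinearOrder α] [TopologicalSpace α]
    [OrderTopology α] [CompactSpace α] [PreconnectedSpace α] [SeparableSpace α] [Nontrivial α] :
    Nonempty (α ≃o Icc (0 : ℝ) 1) := by
  have := denselyOrdered_of_preconnectedSpace (α := α)
  obtain ⟨u, hu, hdense⟩ := exists_strictMono_denseRange_Icc α
  have hcont : Continuous u := hu.monotone.continuous_of_denseRange hdense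
  have hsurj : Function.Surjective u := by
    rw [← range_eq_univ, ← (isCompact_range hcont).isClosed.closure_eq, hdense.closure_range]
  exact ⟨hu.orderIsoOfSurjective u hsurj⟩

theorem homeomorphic_to_unit_interval [TopologicalSpace X] [CompactSpace X]
    [TopologicalSpace.MetrizableSpace X] [ConnectedSpace X] [Nontrivial X]
    (r : X → X → Prop)
    (hrefl : Reflexive r) (htrans : Transitive r) (hanti : AntiSymmetric r)
    (hcomplete : ∀ x y : X, r x y ∨ r y x)
    (hcont : ContinuousPref r) :
    ∃ e : X ≃ₜ Set.Icc (0 : ℝ) 1, ∀ x y : X, r x y ↔ (e y : ℝ) ≤ (e x : ℝ) := by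
  let : LinearOrder X :=
    { le x y := r y x
      le_refl := hrefl
      le_trans _ _ _ hxy hyz := htrans hyz hxy
      le_antisymm _ _ hxy hyx := hanti hyx hxy
      le_total x y := hcomplete y x
      toDecidableLE := Classical.decRel _ }
  have : ClosedIciTopology X := ⟨fun x ↦ (hcont x).1⟩
  have : ClosedIicTopology X := ⟨fun x ↦ (hcont x).2⟩
  have := OrderTopology.of_compactSpace X
  obtain ⟨e⟩ := nonempty_orderIso_Icc_of_compactSpace X
  exact ⟨e.toHomeomorph, fun x y ↦ e.le_iff_le.symm⟩
end

section
/- Let X be a compact topological space admitting a complete, continuous, gapless preference ≿ with connected indifference classes. Then X is connected. Conversely, if X is compact and connected, the trivial preference (all pairs indifferent) is complete, continuous, gapless, and has connected indifference classes. -/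
variable {X : Type*}

lemma exists_greatest' [TopologicalSpace X] [CompactSpace X] (r : X → X → Prop)
    (hrefl : Reflexive r) (htrans : Transitive r) (htot : ∀ x y : X, r x y ∨ r y x)
    (hcl : ∀ x : X, IsClosed {y | r y x}) {K : Set X} (hK : IsClosed K) (hne : K.Nonempty) :
    ∃ m ∈ K, ∀ w ∈ K, r m w := by
  haveI : Nonempty K := hne.to_subtype
  have h := IsCompact.nonempty_iInter_of_directed_nonempty_isCompact_isClosed
    (t := fun w : K => K ∩ {z | r z w.1}) ?_ ?_ ?_ ?_
  · obtain ⟨m, hm⟩ := h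
    simp only [Set.mem_iInter, Set.mem_inter_iff, Set.mem_setOf_eq] at hm
    obtain ⟨w0⟩ := ‹Nonempty K›
    exact ⟨m, (hm w0).1, fun w hw => (hm ⟨w, hw⟩).2⟩
  · intro i j
    rcases htot i.1 j.1 with h | h
    · exact ⟨i, le_refl _, fun z hz => ⟨hz.1, htrans hz.2 h⟩⟩
    · exact ⟨j, fun z hz => ⟨hz.1, htrans hz.2 h⟩, le_refl _⟩
  · exact fun i => ⟨i.1, i.2, hrefl i.1⟩
  · exact fun i => (hK.inter (hcl i.1)).isCompact
  · exact fun i => hK.inter (hcl i.1)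

lemma exists_least' [TopologicalSpace X] [CompactSpace X] (r : X → X → Prop)
    (hrefl : Reflexive r) (htrans : Transitive r) (htot : ∀ x y : X, r x y ∨ r y x)
    (hcl : ∀ x : X, IsClosed {y | r x y}) {K : Set X} (hK : IsClosed K) (hne : K.Nonempty) :
    ∃ m ∈ K, ∀ w ∈ K, r w m := by
  haveI : Nonempty K := hne.to_subtype
  have h := IsCompact.nonempty_iInter_of_directed_nonempty_isCompact_isClosed
    (t := fun w : K => K ∩ {z | r w.1 z}) ?_ ?_ ?_ ?_
  · obtain ⟨m, hm⟩ := h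
    simp only [Set.mem_iInter, Set.mem_inter_iff, Set.mem_setOf_eq] at hm
    obtain ⟨w0⟩ := ‹Nonempty K›
    exact ⟨m, (hm w0).1, fun w hw => (hm ⟨w, hw⟩).2⟩
  · intro i j
    rcases htot i.1 j.1 with h | h
    · exact ⟨j, fun z hz => ⟨hz.1, htrans h hz.2⟩, le_refl _⟩
    · exact ⟨i, le_refl _, fun z hz => ⟨hz.1, htrans h hz.2⟩⟩
  · exact fun i => ⟨i.1, i.2, hrefl i.1⟩
  · exact fun i => (hK.inter (hcl i.1)).isCompact
  · exact fun i => hK.inter (hcl i.1)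

/-- The core contradiction argument. -/
lemma core_lemma [TopologicalSpace X] [CompactSpace X] (r : X → X → Prop)
    (hrefl : Reflexive r) (htrans : Transitive r) (htot : ∀ x y : X, r x y ∨ r y x)
    (hcont : ∀ x : X, IsClosed {y | r y x} ∧ IsClosed {y | r x y}) (hgap : Gapless r)
    {u v : Set X} (hu : IsClosed u) (hv : IsClosed v)
    (huv : u ∩ v = ∅) (hcover : u ∪ v = Set.univ)
    (hnind : ∀ a ∈ u, ∀ b ∈ v, ¬ (r a b ∧ r b a))
    {u0 v0 : X} (hu0 : u0 ∈ u) (hv0 : v0 ∈ v) (h00 : r u0 v0) : False := by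
  set K1 : Set X := ({z | r u0 z} ∩ {z | r z v0}) ∩ v with hK1def
  have hK1cl : IsClosed K1 := (((hcont u0).2.inter (hcont v0).1).inter hv)
  have hK1ne : K1.Nonempty := ⟨v0, ⟨⟨h00, hrefl v0⟩, hv0⟩⟩
  obtain ⟨m, hmK, hmmax⟩ := exists_greatest' r hrefl htrans htot (fun x => (hcont x).1) hK1cl hK1ne
  obtain ⟨⟨hu0m, hmv0⟩, hmv⟩ := hmK
  set D : Set X := (u ∩ {z | r u0 z}) ∩ {z | r z m} with hDdef
  have hDcl : IsClosed D := ((hu.inter (hcont u0).2).inter (hcont m).1)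
  have hDne : D.Nonempty := ⟨u0, ⟨⟨hu0, hrefl u0⟩, hu0m⟩⟩
  obtain ⟨m', hm'D, hm'min⟩ := exists_least' r hrefl htrans htot (fun x => (hcont x).2) hDcl hDne
  obtain ⟨⟨hm'u, hu0m'⟩, hm'm⟩ := hm'D
  have hstrict : StrictPref r m' m :=
    ⟨hm'm, fun h => hnind m' hm'u m hmv ⟨hm'm, h⟩⟩
  obtain ⟨z, ⟨hm'z, hzm'⟩, ⟨hzm, hmz⟩⟩ := hgap m' m hstrict
  have hzuv : z ∈ u ∪ v := hcover ▸ Set.mem_univ z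
  rcases hzuv with hzu | hzv
  · exact hzm' (hm'min z ⟨⟨hzu, htrans hu0m' hm'z⟩, hzm⟩)
  · exact hmz (hmmax z ⟨⟨htrans hu0m' hm'z, htrans hzm hmv0⟩, hzv⟩)

theorem connected_iff_admits_complete_gapless [TopologicalSpace X] [CompactSpace X]
    [Nonempty X] :
    (∀ r : X → X → Prop, Reflexive r → Transitive r → (∀ x y : X, r x y ∨ r y x) →
      ContinuousPref r → Gapless r → (∀ x : X, IsConnected {y | r x y ∧ r y x}) →
      ConnectedSpace X) ∧
    (ConnectedSpace X →
      ∃ r : X → X → Prop, Reflexive r ∧ Transitive r ∧ (∀ x y : X, r x y ∨ r y x) ∧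
        ContinuousPref r ∧ Gapless r ∧ (∀ x : X, IsConnected {y | r x y ∧ r y x})) := by
  constructor
  · intro r hrefl htrans htot hcont hgap hind
    by_contra hcon
    have hnot : ¬ IsPreconnected (Set.univ : Set X) := fun h => hcon { toPreconnectedSpace := ⟨h⟩, toNonempty := ‹_› }
    rw [IsPreconnected] at hnot
    push_neg at hnot
    obtain ⟨U, V, hUo, hVo, hcov, ⟨a, _, haU⟩, ⟨b, _, hbV⟩, hdisj⟩ := hnot
    have hdisj' : U ∩ V = ∅ := by
      rw [Set.univ_inter] at hdisj
      exact hdisj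
    have hcov' : U ∪ V = Set.univ := Set.eq_univ_of_univ_subset hcov
    have hUeq : U = Vᶜ := by
      apply Set.eq_of_subset_of_subset
      · intro x hx hxV
        exact Set.eq_empty_iff_forall_notMem.1 hdisj' x ⟨hx, hxV⟩
      · intro x hx
        rcases (hcov' ▸ Set.mem_univ x : x ∈ U ∪ V) with h | h
        · exact h
        · exact absurd h hx
    have hVeq : V = Uᶜ := by
      rw [hUeq, compl_compl]
    have hUc : IsClosed U := hUeq ▸ hVo.isClosed_compl
    have hVc : IsClosed V := hVeq ▸ hUo.isClosed_compl
    have hnind : ∀ a' ∈ U, ∀ b' ∈ V, ¬ (r a' b' ∧ r b' a') := by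
      rintro a' ha' b' hb' ⟨h1, h2⟩
      have hsub := (hind a').isPreconnected.subset_or_subset hUo hVo
        (Set.disjoint_iff_inter_eq_empty.2 hdisj') (hcov' ▸ Set.subset_univ _)
      have ha'mem : a' ∈ {y | r a' y ∧ r y a'} := ⟨hrefl a', hrefl a'⟩
      have hb'mem : b' ∈ {y | r a' y ∧ r y a'} := ⟨h1, h2⟩
      rcases hsub with h | h
      · exact Set.eq_empty_iff_forall_notMem.1 hdisj' b' ⟨h hb'mem, hb'⟩
      · exact Set.eq_empty_iff_forall_notMem.1 hdisj' a' ⟨ha', h ha'mem⟩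
    rcases htot a b with hab | hba
    · exact core_lemma r hrefl htrans htot hcont hgap hUc hVc hdisj' hcov' hnind haU hbV hab
    · have hdisj'' : V ∩ U = ∅ := by rw [Set.inter_comm]; exact hdisj'
      have hcov'' : V ∪ U = Set.univ := by rw [Set.union_comm]; exact hcov'
      have hnind' : ∀ a' ∈ V, ∀ b' ∈ U, ¬ (r a' b' ∧ r b' a') := by
        rintro a' ha' b' hb' ⟨h1, h2⟩
        exact hnind b' hb' a' ha' ⟨h2, h1⟩
      exact core_lemma r hrefl htrans htot hcont hgap hVc hUc hdisj'' hcov'' hnind' hbV haU hba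
  · intro hconn
    refine ⟨fun _ _ => True, fun _ => trivial, fun _ _ _ _ _ => trivial,
      fun x y => Or.inl trivial, fun x => ⟨?_, ?_⟩, ?_, ?_⟩
    · simpa using isClosed_univ
    · simpa using isClosed_univ
    · rintro x y ⟨_, h⟩
      exact absurd trivial h
    · intro x
      have : {y : X | True ∧ True} = Set.univ := by ext; simp
      rw [this]
      exact ⟨Set.univ_nonempty, isPreconnected_univ⟩
end
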